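/- In the modified GLR test, if on the decision region Δ_m^n it holds that ĥ_l(x^n|a^n)/f̃_m(x^n|a^n) ≤ 1/((M-1)L) (where ĥ_l is the maximum likelihood over Θ_l and f̃_m is the prior-averaged likelihood over Θ_m), then the probability of false detection under any η̄ ∈ Θ_l is at most 1/L: P(δ ≠ l | η̄) ≤ Σ_{m≠l} (1/((M-1)L)) · P̃(δ = m) ≤ 1/L. -/
import Mathlib


open MeasureTheory

/-- Admissibility of the modified GLR test: if on each decision region `Δ_m = {δ = m}`
(`m ≠ l`) the likelihood-ratio bound `ĥ_l ≤ f̃_m / ((M-1)L)` holds, where `ĥ_l` dominates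
the true likelihood `f` (maximum likelihood over `Θ_l`) and `f̃_m` is the prior-averaged
likelihood over `Θ_m` (a sub-probability density w.r.t. the reference measure `ν`),
then the probability of false detection under the true configuration satisfies
`P(δ ≠ l) ≤ Σ_{m≠l} (1/((M-1)L)) · P̃_m(δ = m) ≤ 1/L`. -/
theorem modified_glr_admissibility
    {Ω : Type*} [MeasurableSpace Ω] (ν : Measure Ω)
    {M : ℕ} (hM : 2 ≤ M) (L : ℝ) (hL : 1 ≤ L)
    (f hhat : Ω → ENNReal) (ftil : Fin M → Ω → ENNReal)
    (hfmeas : Measurable f) (hftilmeas : ∀ m, Measurable (ftil m))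
    (hprob : IsProbabilityMeasure (ν.withDensity f))
    (hsub : ∀ m, ∫⁻ ω, ftil m ω ∂ν ≤ 1)
    (hdom : ∀ ω, f ω ≤ hhat ω)
    (l : Fin M) (δ : Ω → Fin M) (hδ : Measurable δ)
    (hratio : ∀ m : Fin M, m ≠ l → ∀ ω, δ ω = m →
      hhat ω ≤ ftil m ω / (((M : ENNReal) - 1) * ENNReal.ofReal L)) :
    (ν.withDensity f) {ω | δ ω ≠ l} ≤
        ∑ m ∈ Finset.univ.erase l,
          (1 / (((M : ENNReal) - 1) * ENNReal.ofReal L)) *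
            (ν.withDensity (ftil m)) {ω | δ ω = m} ∧
    (∑ m ∈ Finset.univ.erase l,
        (1 / (((M : ENNReal) - 1) * ENNReal.ofReal L)) *
          (ν.withDensity (ftil m)) {ω | δ ω = m}) ≤ 1 / ENNReal.ofReal L := by
  set c : ENNReal := ((M : ENNReal) - 1) * ENNReal.ofReal L with hc
  have hM1 : (1:ENNReal) ≤ (M:ENNReal) - 1 := by
    have h2 : (2:ENNReal) ≤ (M:ENNReal) := by exact_mod_cast hM
    rw [← Nat.cast_one (R := ENNReal), ← ENNReal.natCast_sub]
    exact_mod_cast (by omega : 1 ≤ M - 1)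
  have hL1 : (1:ENNReal) ≤ ENNReal.ofReal L := by
    rw [← ENNReal.ofReal_one]; exact ENNReal.ofReal_le_ofReal hL
  have hMne0 : (M:ENNReal) - 1 ≠ 0 := by
    intro h; rw [h] at hM1; exact (not_le.2 zero_lt_one) hM1
  have hMnetop : (M:ENNReal) - 1 ≠ ⊤ := by
    exact ne_top_of_le_ne_top (ENNReal.natCast_ne_top M) (tsub_le_self)
  have hLne0 : ENNReal.ofReal L ≠ 0 := by
    intro h; rw [h] at hL1; exact (not_le.2 zero_lt_one) hL1
  have hc0 : c ≠ 0 := mul_ne_zero hMne0 hLne0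
  have hctop : c ≠ ⊤ := ENNReal.mul_ne_top hMnetop ENNReal.ofReal_ne_top
  have hsets : ∀ m : Fin M, MeasurableSet {ω | δ ω = m} :=
    fun m => hδ (measurableSet_singleton m)
  have h2 : ∀ m ∈ Finset.univ.erase l,
      (ν.withDensity f) {ω | δ ω = m} ≤ (1/c) * (ν.withDensity (ftil m)) {ω | δ ω = m} := by
    intro m hm
    have hml := (Finset.mem_erase.1 hm).1
    rw [withDensity_apply _ (hsets m), withDensity_apply _ (hsets m), one_div,
      ← lintegral_const_mul _ (hftilmeas m)]
    refine setLIntegral_mono (by exact (hftilmeas m).const_mul _) ?_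
    intro ω hω
    calc f ω ≤ hhat ω := hdom ω
      _ ≤ ftil m ω / c := hratio m hml ω hω
      _ = c⁻¹ * ftil m ω := by rw [div_eq_mul_inv, mul_comm]
  constructor
  · have hsub1 : {ω | δ ω ≠ l} ⊆ ⋃ m ∈ Finset.univ.erase l, {ω | δ ω = m} := by
      intro ω hω
      simp only [Set.mem_iUnion]
      exact ⟨δ ω, Finset.mem_erase.2 ⟨hω, Finset.mem_univ _⟩, rfl⟩
    calc (ν.withDensity f) {ω | δ ω ≠ l}
        ≤ (ν.withDensity f) (⋃ m ∈ Finset.univ.erase l, {ω | δ ω = m}) :=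
          measure_mono hsub1
      _ ≤ ∑ m ∈ Finset.univ.erase l, (ν.withDensity f) {ω | δ ω = m} :=
          measure_biUnion_finset_le _ _
      _ ≤ ∑ m ∈ Finset.univ.erase l, (1/c) * (ν.withDensity (ftil m)) {ω | δ ω = m} :=
          Finset.sum_le_sum h2
  · have h3 : ∀ m : Fin M, (ν.withDensity (ftil m)) {ω | δ ω = m} ≤ 1 := by
      intro m
      calc (ν.withDensity (ftil m)) {ω | δ ω = m}
          ≤ (ν.withDensity (ftil m)) Set.univ := measure_mono (Set.subset_univ _)
        _ = ∫⁻ ω, ftil m ω ∂ν := by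
            rw [withDensity_apply _ MeasurableSet.univ, Measure.restrict_univ]
        _ ≤ 1 := hsub m
    have hcard : (Finset.univ.erase l).card = M - 1 := by
      rw [Finset.card_erase_of_mem (Finset.mem_univ l), Finset.card_univ, Fintype.card_fin]
    calc (∑ m ∈ Finset.univ.erase l, (1/c) * (ν.withDensity (ftil m)) {ω | δ ω = m})
        ≤ ∑ m ∈ Finset.univ.erase l, (1/c) :=
          Finset.sum_le_sum (fun m _ => by
            calc (1/c) * (ν.withDensity (ftil m)) {ω | δ ω = m}
                ≤ (1/c) * 1 := mul_le_mul_right (h3 m) _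
              _ = 1/c := mul_one _)
      _ = ((M - 1 : ℕ) : ENNReal) * (1/c) := by
          rw [Finset.sum_const, hcard, nsmul_eq_mul]
      _ = ((M:ENNReal) - 1) * (1/c) := by
          congr 1
          rw [ENNReal.natCast_sub, Nat.cast_one]
      _ = 1 / ENNReal.ofReal L := by
          rw [hc, one_div, one_div, ENNReal.mul_inv (Or.inl hMne0) (Or.inl hMnetop),
            ← mul_assoc, ENNReal.mul_inv_cancel hMne0 hMnetop, one_mul]
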